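/- arXiv:2307.00508 — 5 statements merged into one kernel-verified Lean document; each statement's English description precedes it below -/
import Mathlib

section
/- Let A : H → H and D : K → K be invertible operators, B : K → H, C : H → K. Then the restriction of D⁻¹ C to ker(A - B D⁻¹ C) is a linear isomorphism onto ker(D - C A⁻¹ B), with inverse given by the restriction of A⁻¹ B. -/
/-!
For `v ∈ ker (A - B D⁻¹ C)` we have `A v = B (D⁻¹ C v)`, so `A⁻¹ B (D⁻¹ C v) = v`; hence
`w := D⁻¹ C v` satisfies `C A⁻¹ B w = C v = D w`. Exchanging the roles of `(A, B)` and `(D, C)`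
gives the other half.
-/

namespace LinearMap

variable {R M N : Type*} [Semiring R] [AddCommGroup M] [Module R M] [AddCommGroup N] [Module R N]
  {A A' : M →ₗ[R] M} {D D' : N →ₗ[R] N} {B : N →ₗ[R] M} {C : M →ₗ[R] N} {v : M}

theorem apply_eq_of_mem_ker_sub_comp_comp (hv : v ∈ ker (A - B ∘ₗ D' ∘ₗ C)) :
    A v = B (D' (C v)) :=
  sub_eq_zero.mp hv

theorem comp_apply_eq_self_of_mem_ker_sub_comp_comp (hA : A' ∘ₗ A = id)
    (hv : v ∈ ker (A - B ∘ₗ D' ∘ₗ C)) : A' (B (D' (C v))) = v := by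
  rw [← apply_eq_of_mem_ker_sub_comp_comp hv, ← comp_apply, hA, id_apply]

theorem apply_mem_ker_sub_comp_comp (hA : A' ∘ₗ A = id) (hD : D ∘ₗ D' = id)
    (hv : v ∈ ker (A - B ∘ₗ D' ∘ₗ C)) : D' (C v) ∈ ker (D - C ∘ₗ A' ∘ₗ B) := by
  rw [mem_ker, sub_apply, comp_apply, comp_apply,
    comp_apply_eq_self_of_mem_ker_sub_comp_comp hA hv, ← comp_apply D, hD, id_apply, sub_self]

end LinearMap

theorem stmt_1_general
    {H K : Type*} [NormedAddCommGroup H] [InnerProductSpace ℂ H]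
    [NormedAddCommGroup K] [InnerProductSpace ℂ K]
    (A A' : H →L[ℂ] H) (D D' : K →L[ℂ] K)
    (hA : A ∘L A' = ContinuousLinearMap.id ℂ H)
    (hA' : A' ∘L A = ContinuousLinearMap.id ℂ H)
    (hD : D ∘L D' = ContinuousLinearMap.id ℂ K)
    (hD' : D' ∘L D = ContinuousLinearMap.id ℂ K)
    (B : K →L[ℂ] H) (C : H →L[ℂ] K) :
    -- `D⁻¹ C` maps `ker (A - B D⁻¹ C)` into `ker (D - C A⁻¹ B)`
    (∀ v : H, (A - B ∘L D' ∘L C) v = 0 → (D - C ∘L A' ∘L B) (D' (C v)) = 0) ∧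
    -- `A⁻¹ B` maps `ker (D - C A⁻¹ B)` into `ker (A - B D⁻¹ C)`
    (∀ w : K, (D - C ∘L A' ∘L B) w = 0 → (A - B ∘L D' ∘L C) (A' (B w)) = 0) ∧
    -- the two restrictions are mutually inverse
    (∀ v : H, (A - B ∘L D' ∘L C) v = 0 → A' (B (D' (C v))) = v) ∧
    (∀ w : K, (D - C ∘L A' ∘L B) w = 0 → D' (C (A' (B w))) = w) := by
  -- the continuous-linear statements unfold definitionally to the linear ones
  have hA := congrArg ContinuousLinearMap.toLinearMap hA
  have hA' := congrArg ContinuousLinearMap.toLinearMap hA'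
  have hD := congrArg ContinuousLinearMap.toLinearMap hD
  have hD' := congrArg ContinuousLinearMap.toLinearMap hD'
  exact ⟨fun _ ↦ LinearMap.apply_mem_ker_sub_comp_comp hA' hD,
    fun _ ↦ LinearMap.apply_mem_ker_sub_comp_comp hD' hA,
    fun _ ↦ LinearMap.comp_apply_eq_self_of_mem_ker_sub_comp_comp hA',
    fun _ ↦ LinearMap.comp_apply_eq_self_of_mem_ker_sub_comp_comp hD'⟩

/-- The restriction of `D⁻¹ C` to `ker (A - B D⁻¹ C)` is a linear isomorphism onto
`ker (D - C A⁻¹ B)`, with inverse the restriction of `A⁻¹ B`. -/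
theorem stmt_1
    {H K : Type*} [NormedAddCommGroup H] [InnerProductSpace ℂ H] [CompleteSpace H]
    [NormedAddCommGroup K] [InnerProductSpace ℂ K] [CompleteSpace K]
    (A A' : H →L[ℂ] H) (D D' : K →L[ℂ] K)
    (hA : A ∘L A' = ContinuousLinearMap.id ℂ H)
    (hA' : A' ∘L A = ContinuousLinearMap.id ℂ H)
    (hD : D ∘L D' = ContinuousLinearMap.id ℂ K)
    (hD' : D' ∘L D = ContinuousLinearMap.id ℂ K)
    (B : K →L[ℂ] H) (C : H →L[ℂ] K) :
    -- `D⁻¹ C` maps `ker (A - B D⁻¹ C)` into `ker (D - C A⁻¹ B)`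
    (∀ v : H, (A - B ∘L D' ∘L C) v = 0 → (D - C ∘L A' ∘L B) (D' (C v)) = 0) ∧
    -- `A⁻¹ B` maps `ker (D - C A⁻¹ B)` into `ker (A - B D⁻¹ C)`
    (∀ w : K, (D - C ∘L A' ∘L B) w = 0 → (A - B ∘L D' ∘L C) (A' (B w)) = 0) ∧
    -- the two restrictions are mutually inverse
    (∀ v : H, (A - B ∘L D' ∘L C) v = 0 → A' (B (D' (C v))) = v) ∧
    (∀ w : K, (D - C ∘L A' ∘L B) w = 0 → D' (C (A' (B w))) = w) :=
  stmt_1_general A A' D D' hA hA' hD hD' B C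
end

section
/- Let B be a unital C*-algebra, A ⊆ B a unital operator algebra with C*(A) = B, π : B → B(H) a *-representation, a ∈ A a contraction, and G ⊆ H a finite-dimensional subspace such that the compression P_G π(a)|_G has norm 1. Then there exists a unit vector ξ ∈ G with π(a* a) ξ = ξ. -/
/-!
In finite dimensions the compression `T = P_G π(a)|_G` attains its norm at some `ξ` in the unit
ball of `G`, so `1 = ‖T ξ‖ ≤ ‖π a ξ‖ ≤ ‖ξ‖ ≤ 1`. Hence `ξ` is a unit vector on which the
contraction `S = π a` is isometric, and then `S* S ξ = ξ`: expanding,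
`‖S* S ξ - ξ‖² = ‖S* S ξ‖² - 2 ‖S ξ‖² + ‖ξ‖² ≤ 0`.
-/

open Metric

namespace ContinuousLinearMap

theorem exists_mem_closedBall_norm_apply_eq_opNorm {𝕜 E F : Type*} [DenselyNormedField 𝕜]
    [NormedAddCommGroup E] [NormedSpace 𝕜 E] [ProperSpace E]
    [SeminormedAddCommGroup F] [NormedSpace 𝕜 F] (f : E →L[𝕜] F) :
    ∃ x ∈ closedBall (0 : E) 1, ‖f x‖ = ‖f‖ := by
  have hmem := ((isCompact_closedBall (0 : E) 1).image f.continuous.norm).sSup_mem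
    ((nonempty_closedBall.2 zero_le_one).image _)
  rwa [f.sSup_unitClosedBall_eq_norm] at hmem

variable {𝕜 E F : Type*} [RCLike 𝕜]
  [NormedAddCommGroup E] [InnerProductSpace 𝕜 E] [CompleteSpace E]
  [NormedAddCommGroup F] [InnerProductSpace 𝕜 F] [CompleteSpace F]

theorem adjoint_apply_apply_eq_of_norm_apply_eq {S : E →L[𝕜] F} (hS : ‖S‖ ≤ 1) {v : E}
    (hv : ‖S v‖ = ‖v‖) : adjoint S (S v) = v := by
  have hinner : RCLike.re (inner 𝕜 (adjoint S (S v)) v) = ‖v‖ ^ 2 := by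
    rw [adjoint_inner_left, inner_self_eq_norm_sq, hv]
  have hle : ‖adjoint S (S v)‖ ≤ ‖v‖ :=
    calc ‖adjoint S (S v)‖ ≤ 1 * ‖S v‖ :=
          (adjoint S).le_of_opNorm_le (by rwa [adjoint.norm_map]) _
      _ = ‖v‖ := by rw [one_mul, hv]
  have hsq : ‖adjoint S (S v) - v‖ ^ 2 ≤ 0 := by
    rw [@norm_sub_sq 𝕜, hinner]
    nlinarith [norm_nonneg (adjoint S (S v))]
  exact sub_eq_zero.mp (norm_eq_zero.mp ((sq_nonpos_iff _).mp hsq))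

end ContinuousLinearMap

open ContinuousLinearMap in
/-- If `π` is a representation of a unital C*-algebra `B`, `a ∈ B` is a contraction and
`G` is a finite-dimensional subspace of `H` on which the compression of `π a` has norm `1`,
then there is a unit vector `ξ ∈ G` with `π (a* a) ξ = ξ`. -/
theorem stmt_3
    {B : Type*} [NormedRing B] [StarRing B] [CStarRing B] [NormedAlgebra ℂ B]
    [CompleteSpace B] [StarModule ℂ B]
    {H : Type*} [NormedAddCommGroup H] [InnerProductSpace ℂ H] [CompleteSpace H]
    (π : B →⋆ₐ[ℂ] (H →L[ℂ] H))
    (a : B) (ha : ‖a‖ ≤ 1)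
    (G : Submodule ℂ H) [FiniteDimensional ℂ G]
    (hG : ‖(G.orthogonalProjection) ∘L (π a) ∘L G.subtypeL‖ = 1) :
    ∃ ξ : G, ‖(ξ : H)‖ = 1 ∧ π (star a * a) (ξ : H) = (ξ : H) := by
  let _ : CStarAlgebra B :=
    { ‹NormedRing B›, ‹StarRing B›, ‹CStarRing B›, ‹NormedAlgebra ℂ B›, ‹StarModule ℂ B› with
      complete := ‹CompleteSpace B›.1 }
  have hπa : ‖π a‖ ≤ 1 := (NonUnitalStarAlgHom.norm_apply_le π a).trans ha
  obtain ⟨ξ, hξ, hTξ⟩ :=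
    exists_mem_closedBall_norm_apply_eq_opNorm (G.orthogonalProjectionOnto ∘L π a ∘L G.subtypeL)
  have hξ_le : ‖(ξ : H)‖ ≤ 1 := mem_closedBall_zero_iff.mp hξ
  have hπaξ_ge : 1 ≤ ‖π a ξ‖ := hG ▸ hTξ ▸ G.norm_orthogonalProjectionOnto_apply_le (π a ξ)
  have hπaξ_le : ‖π a ξ‖ ≤ ‖(ξ : H)‖ := by simpa using (π a).le_of_opNorm_le hπa ξ
  refine ⟨ξ, by linarith, ?_⟩
  rw [map_mul, map_star, star_eq_adjoint]
  exact adjoint_apply_apply_eq_of_norm_apply_eq hπa (by linarith)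
end

section
/- Let φ : B(G) → B(G) be a unital completely positive map on operators of a finite-dimensional Hilbert space G arising as a compression of a representation, and let a be a contraction with ‖φ(a)‖ = 1. Then ‖φ(a* a)‖ = 1 and φ(a* a) has 1 as an eigenvalue. -/
/-!
Kadison–Schwarz gives `star (φ a) * φ a ≤ φ (star a * a)` in the C⋆-algebra `B(G)`, so by
monotonicity of the norm on positive elements `1 = ‖φ a‖ ^ 2 ≤ ‖φ (star a * a)‖ ≤ ‖a‖ ^ 2 ≤ 1`.
The norm of a positive operator lies in its spectrum, and in finite dimensions every spectral
value is an eigenvalue.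
-/

theorem CStarRing.norm_sq_le_norm_of_star_mul_self_le {A : Type*} [NonUnitalCStarAlgebra A]
    [PartialOrder A] [StarOrderedRing A] {x t : A} (h : star x * x ≤ t) : ‖x‖ ^ 2 ≤ ‖t‖ := by
  rw [sq, ← CStarRing.norm_star_mul_self]
  exact CStarAlgebra.norm_le_norm_of_nonneg_of_le (star_mul_self_nonneg x) h

theorem ContinuousLinearMap.hasEigenvalue_norm_of_nonneg {G : Type*} [NormedAddCommGroup G]
    [InnerProductSpace ℂ G] [FiniteDimensional ℂ G] [Nontrivial G] {T : G →L[ℂ] G}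
    (hT : 0 ≤ T) : Module.End.HasEigenvalue (T : G →ₗ[ℂ] G) (‖T‖ : ℂ) := by
  have := FiniteDimensional.complete ℂ G
  rw [Module.End.hasEigenvalue_iff_mem_spectrum, ← ContinuousLinearMap.spectrum_eq]
  exact (spectrum.algebraMap_mem_iff ℂ).mpr (CStarAlgebra.norm_mem_spectrum_of_nonneg hT)

theorem stmt_4_general
    {B : Type*} [NormedRing B] [StarRing B] [CStarRing B] [NormedAlgebra ℂ B]
    {G : Type*} [NormedAddCommGroup G] [InnerProductSpace ℂ G] [FiniteDimensional ℂ G]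
    (φ : B →ₗ[ℂ] (G →L[ℂ] G))
    (hcontr : ∀ x : B, ‖φ x‖ ≤ ‖x‖)
    (hKS : ∀ x : B, (φ (star x * x) - star (φ x) * φ x).IsPositive)
    (a : B) (ha : ‖a‖ ≤ 1) (hφa : ‖φ a‖ = 1) :
    ‖φ (star a * a)‖ = 1 ∧ ∃ ξ : G, ξ ≠ 0 ∧ φ (star a * a) ξ = ξ := by
  have := FiniteDimensional.complete ℂ G
  set T := φ (star a * a)
  have hKSa : star (φ a) * φ a ≤ T := hKS a
  have hle : ‖T‖ ≤ 1 := calc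
    ‖T‖ ≤ ‖star a * a‖ := hcontr _
    _ = ‖a‖ * ‖a‖ := CStarRing.norm_star_mul_self
    _ ≤ 1 := mul_le_one₀ ha (norm_nonneg a) ha
  have hge : 1 ≤ ‖T‖ := by
    simpa [hφa] using CStarRing.norm_sq_le_norm_of_star_mul_self_le hKSa
  have hnorm : ‖T‖ = 1 := le_antisymm hle hge
  have : Nontrivial G := by
    by_contra h
    rw [not_nontrivial_iff_subsingleton] at h
    simp [Subsingleton.elim T 0] at hnorm
  obtain ⟨ξ, hξ⟩ := (ContinuousLinearMap.hasEigenvalue_norm_of_nonneg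
    ((star_mul_self_nonneg (φ a)).trans hKSa)).exists_hasEigenvector
  refine ⟨hnorm, ξ, hξ.2, ?_⟩
  simpa [hnorm] using Module.End.mem_eigenspace_iff.mp hξ.1

/-- If `φ` is a unital completely positive (here: unital, positive, contractive and
satisfying the Kadison–Schwarz inequality) map into the operators on a finite-dimensional
Hilbert space `G` and `a` is a contraction with `‖φ a‖ = 1`, then `‖φ (a* a)‖ = 1` and
`φ (a* a)` has `1` as an eigenvalue. -/
theorem stmt_4
    {B : Type*} [NormedRing B] [StarRing B] [CStarRing B] [NormedAlgebra ℂ B]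
    [CompleteSpace B] [StarModule ℂ B]
    {G : Type*} [NormedAddCommGroup G] [InnerProductSpace ℂ G] [FiniteDimensional ℂ G]
    (φ : B →ₗ[ℂ] (G →L[ℂ] G))
    (hunital : φ 1 = 1)
    (hpos : ∀ x : B, (φ (star x * x)).IsPositive)
    (hcontr : ∀ x : B, ‖φ x‖ ≤ ‖x‖)
    (hKS : ∀ x : B, (φ (star x * x) - star (φ x) * φ x).IsPositive)
    (a : B) (ha : ‖a‖ ≤ 1) (hφa : ‖φ a‖ = 1) :
    ‖φ (star a * a)‖ = 1 ∧ ∃ ξ : G, ξ ≠ 0 ∧ φ (star a * a) ξ = ξ :=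
  stmt_4_general φ hcontr hKS a ha hφa
end

section
/- Let Z = (Z_1,…,Z_d) be a d-tuple of n×n complex matrices and Y = (Y_1,…,Y_d) a d-tuple of bounded operators on a Hilbert space H, both row contractions (i.e., Σ Z_j Z_j* ≤ I and Σ Y_j Y_j* ≤ I). Suppose T : ℂⁿ → H has ‖T‖ = 1, satisfies Σ_j Y_j T Z_j* = T, and v ∈ ℂⁿ is a unit vector with ‖Tv‖ = 1. Then Y_j* T v = T Z_j* v for every j = 1,…,d. -/
/-!
Put `a j = T Z_j* v` and `b j = Y_j* T v`. The fixed-point equation gives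
`∑ ⟪a j, b j⟫ = ⟪∑ Y_j T Z_j* v, T v⟫ = ‖T v‖² = 1`, while `‖T‖ = 1` and the two row-contraction
hypotheses give `∑ ‖a j‖² ≤ ‖v‖² = 1` and `∑ ‖b j‖² ≤ ‖T v‖² = 1`. Expanding then yields
`∑ ‖a j - b j‖² ≤ 0`: this is the equality case of Cauchy–Schwarz in `ℓ²(Fin d; H)`.
-/

open scoped Matrix ComplexOrder InnerProductSpace

section
variable {𝕜 E ι : Type*} [RCLike 𝕜] [NormedAddCommGroup E] [InnerProductSpace 𝕜 E] [Fintype ι]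

open RCLike

theorem eq_of_sum_norm_sq_le_one_of_sum_re_inner_eq_one {a b : ι → E}
    (ha : ∑ i, ‖a i‖ ^ 2 ≤ 1) (hb : ∑ i, ‖b i‖ ^ 2 ≤ 1) (hab : ∑ i, re ⟪a i, b i⟫_𝕜 = 1) :
    a = b := by
  have hsum : ∑ i, ‖a i - b i‖ ^ 2 ≤ 0 := by
    simp only [norm_sub_sq (𝕜 := 𝕜), Finset.sum_add_distrib, Finset.sum_sub_distrib,
      ← Finset.mul_sum, hab]
    linarith
  funext i
  rw [← sub_eq_zero, ← norm_eq_zero, ← sq_eq_zero_iff]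
  exact (Finset.sum_eq_zero_iff_of_nonneg fun i _ => sq_nonneg ‖a i - b i‖).mp
    (hsum.antisymm (Finset.sum_nonneg fun i _ => sq_nonneg _)) i (Finset.mem_univ i)

open ContinuousLinearMap in
theorem ContinuousLinearMap.sum_norm_sq_adjoint_apply_le [CompleteSpace E]
    {A : ι → E →L[𝕜] E} (hA : (1 - ∑ i, A i * star (A i)).IsPositive) (x : E) :
    ∑ i, ‖star (A i) x‖ ^ 2 ≤ ‖x‖ ^ 2 := by
  have hnorm (i : ι) : ‖star (A i) x‖ ^ 2 = re ⟪x, (A i * star (A i)) x⟫_𝕜 := by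
    rw [star_eq_adjoint, apply_norm_sq_eq_inner_adjoint_right, adjoint_adjoint]
    rfl
  have hpos := hA.re_inner_nonneg_right x
  simp only [sub_apply, one_apply_eq_self, sum_apply, inner_sub_right, inner_sum, map_sub,
    map_sum, ← hnorm, inner_self_eq_norm_sq] at hpos
  linarith

end

theorem Matrix.PosSemidef.isPositive_toEuclideanCLM {𝕜 n : Type*} [RCLike 𝕜] [Fintype n]
    [DecidableEq n] {M : Matrix n n 𝕜} (hM : M.PosSemidef) :
    (Matrix.toEuclideanCLM (𝕜 := 𝕜) M).IsPositive :=
  Matrix.isPositive_toEuclideanLin_iff.mpr hM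

open ContinuousLinearMap in
/-- Equality case of Cauchy–Schwarz for fixed points of `ψ_{Y,Z}`: if `T` is a norm-one
fixed point of `T ↦ ∑ Y_j T Z_j*` with `Z`, `Y` row contractions, and `v` is a unit vector
with `‖T v‖ = 1`, then `Y_j* T v = T Z_j* v` for all `j`. -/
theorem stmt_6 {d n : ℕ}
    {H : Type*} [NormedAddCommGroup H] [InnerProductSpace ℂ H] [CompleteSpace H]
    (Z : Fin d → Matrix (Fin n) (Fin n) ℂ) (Y : Fin d → H →L[ℂ] H)
    (hZ : Matrix.PosSemidef (1 - ∑ j, Z j * (Z j)ᴴ))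
    (hY : (1 - ∑ j, Y j * star (Y j)).IsPositive)
    (T : EuclideanSpace ℂ (Fin n) →L[ℂ] H) (hT : ‖T‖ = 1)
    (hfix : ∑ j, (Y j) ∘L T ∘L star (Matrix.toEuclideanCLM (𝕜 := ℂ) (Z j)) = T)
    (v : EuclideanSpace ℂ (Fin n)) (hv : ‖v‖ = 1) (hTv : ‖T v‖ = 1) :
    ∀ j, (star (Y j)) (T v) = T ((star (Matrix.toEuclideanCLM (𝕜 := ℂ) (Z j))) v) := by
  set Zc := fun j => Matrix.toEuclideanCLM (𝕜 := ℂ) (Z j)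
  have hZc : (1 - ∑ j, Zc j * star (Zc j)).IsPositive := by
    convert hZ.isPositive_toEuclideanCLM
    simp only [Zc, map_sub, map_one, map_sum, map_mul, ← Matrix.star_eq_conjTranspose, map_star]
  have hTZ : ∑ j, ‖T (star (Zc j) v)‖ ^ 2 ≤ 1 :=
    calc ∑ j, ‖T (star (Zc j) v)‖ ^ 2 ≤ ∑ j, ‖star (Zc j) v‖ ^ 2 := by
          gcongr with j
          simpa [hT] using T.le_opNorm (star (Zc j) v)
      _ ≤ 1 := by simpa [hv] using sum_norm_sq_adjoint_apply_le hZc v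
  have hYT : ∑ j, ‖star (Y j) (T v)‖ ^ 2 ≤ 1 := by
    simpa [hTv] using sum_norm_sq_adjoint_apply_le hY (T v)
  have hfix_v : ∑ j, Y j (T (star (Zc j) v)) = T v := by
    simpa only [sum_apply, comp_apply] using congr($hfix v)
  have hinner : ∑ j, RCLike.re ⟪T (star (Zc j) v), star (Y j) (T v)⟫_ℂ = 1 := by
    simp only [star_eq_adjoint, adjoint_inner_right, ← map_sum, ← sum_inner] at hfix_v ⊢
    rw [hfix_v, inner_self_eq_norm_sq, hTv, one_pow]
  intro j
  exact (congrFun (eq_of_sum_norm_sq_le_one_of_sum_re_inner_eq_one hTZ hYT hinner) j).symm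
end

section
/- Let r be a noncommutative rational function with Fornasini–Marchesini realization r(Z) = D·I + (I⊗C*) L_A(Z)⁻¹ (Σ_j Z_j ⊗ B_j), where L_A(Z) = I - Σ_j Z_j ⊗ A_j, evaluated at a tuple Z of m×m matrices with L_A(Z) invertible. For λ ≠ D, λ is an eigenvalue of r(Z) if and only if 1 is an eigenvalue of Σ_j Z_j ⊗ A_j^{(λ)}, where A_j^{(λ)} = A_j + (λ - D)⁻¹ B_j C*. Moreover if v is an eigenvector of Σ_j Z_j ⊗ A_j^{(λ)} with eigenvalue 1, then (I ⊗ C*) v is an eigenvector of r(Z) with eigenvalue λ. -/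
open scoped Matrix Kronecker

/-- The linear pencil `L_A(Z) = I - ∑ Z_j ⊗ A_j`. -/
noncomputable def pencilL {d m n : ℕ} (Z : Fin d → Matrix (Fin m) (Fin m) ℂ)
    (A : Fin d → Matrix (Fin n) (Fin n) ℂ) :
    Matrix (Fin m × Fin n) (Fin m × Fin n) ℂ :=
  1 - ∑ j, Z j ⊗ₖ A j

/-- The matrix `I_m ⊗ C*`. -/
noncomputable def rowC {m n : ℕ} (C : Fin n → ℂ) :
    Matrix (Fin m × Unit) (Fin m × Fin n) ℂ :=
  (1 : Matrix (Fin m) (Fin m) ℂ) ⊗ₖ (Matrix.of fun (_ : Unit) i => star (C i))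

/-- The matrix `∑ Z_j ⊗ B_j`. -/
noncomputable def colB {d m n : ℕ} (Z : Fin d → Matrix (Fin m) (Fin m) ℂ)
    (B : Fin d → Fin n → ℂ) :
    Matrix (Fin m × Fin n) (Fin m × Unit) ℂ :=
  ∑ j, Z j ⊗ₖ (Matrix.of fun i (_ : Unit) => B j i)

/-- The evaluation `r(Z) = D I + (I ⊗ C*) L_A(Z)⁻¹ (∑ Z_j ⊗ B_j)` of the FM realization. -/
noncomputable def fmEval {d m n : ℕ} (Z : Fin d → Matrix (Fin m) (Fin m) ℂ)
    (A : Fin d → Matrix (Fin n) (Fin n) ℂ) (B : Fin d → Fin n → ℂ) (C : Fin n → ℂ)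
    (D : ℂ) : Matrix (Fin m × Unit) (Fin m × Unit) ℂ :=
  D • 1 + (rowC C * (pencilL Z A)⁻¹ : Matrix (Fin m × Unit) (Fin m × Fin n) ℂ) * colB Z B

/-! With `μ = λ - D`, `X = I ⊗ C*`, `Y = ∑ Z_j ⊗ B_j` and `L = L_A(Z)`, the matrix
`∑ Z_j ⊗ A_j^{(λ)}` equals `I - L + μ⁻¹ Y X`, so its fixed vectors are the solutions of
`μ L v = Y X v`. For such `v`, `X v` is an eigenvector of `X L⁻¹ Y = r(Z) - D` for `μ`, and
conversely an eigenvector `w` of `X L⁻¹ Y` for `μ ≠ 0` is `X v` for `v = μ⁻¹ L⁻¹ Y w`: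
this is the Schur complement of `L` in `[[μ, X], [Y, L]]`. -/

section RealizationEigen

variable {K p q : Type*} [Field K] [Fintype p] [Fintype q] [DecidableEq q]
  {L : Matrix q q K} {X : Matrix p q K} {Y : Matrix q p K} {μ : K}

theorem Matrix.mulVec_inv_mulVec_mulVec_eq_smul (hL : IsUnit L) {v : q → K}
    (hv : μ • L *ᵥ v = Y *ᵥ X *ᵥ v) : X *ᵥ L⁻¹ *ᵥ Y *ᵥ X *ᵥ v = μ • X *ᵥ v := by
  rw [← hv, Matrix.mulVec_smul, Matrix.mulVec_mulVec,
    Matrix.nonsing_inv_mul _ ((Matrix.isUnit_iff_isUnit_det L).mp hL), Matrix.one_mulVec,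
    Matrix.mulVec_smul]

theorem Matrix.mulVec_ne_zero_of_smul_mulVec_eq (hL : IsUnit L) (hμ : μ ≠ 0) {v : q → K}
    (hv0 : v ≠ 0) (hv : μ • L *ᵥ v = Y *ᵥ X *ᵥ v) : X *ᵥ v ≠ 0 := by
  intro hXv
  rw [hXv, Matrix.mulVec_zero, smul_eq_zero_iff_right hμ] at hv
  exact hv0 ((Matrix.mulVec_injective_iff_isUnit.mpr hL) (hv.trans (Matrix.mulVec_zero L).symm))

theorem Matrix.exists_smul_mulVec_eq_of_mulVec_inv_mulVec_eq_smul (hL : IsUnit L) (hμ : μ ≠ 0)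
    {w : p → K} (hw : X *ᵥ L⁻¹ *ᵥ Y *ᵥ w = μ • w) :
    ∃ v, X *ᵥ v = w ∧ μ • L *ᵥ v = Y *ᵥ X *ᵥ v := by
  set v := μ⁻¹ • L⁻¹ *ᵥ Y *ᵥ w
  have hXv : X *ᵥ v = w := by
    rw [Matrix.mulVec_smul, hw, inv_smul_smul₀ hμ]
  refine ⟨v, hXv, ?_⟩
  rw [hXv, Matrix.mulVec_smul, Matrix.mulVec_mulVec,
    Matrix.mul_nonsing_inv _ ((Matrix.isUnit_iff_isUnit_det L).mp hL), Matrix.one_mulVec,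
    smul_inv_smul₀ hμ]

end RealizationEigen

theorem sum_kronecker_add_smul_vecMulVec_mulVec {d m n : ℕ}
    (Z : Fin d → Matrix (Fin m) (Fin m) ℂ) (A : Fin d → Matrix (Fin n) (Fin n) ℂ)
    (B : Fin d → Fin n → ℂ) (C : Fin n → ℂ) (c : ℂ) (v : Fin m × Fin n → ℂ) :
    (∑ j, Z j ⊗ₖ (A j + c • Matrix.vecMulVec (B j) (fun i => star (C i)))) *ᵥ v =
      v - pencilL Z A *ᵥ v + c • colB Z B *ᵥ rowC C *ᵥ v := by
  have hYX : (∑ j, Z j ⊗ₖ Matrix.vecMulVec (B j) (fun i => star (C i))) *ᵥ v =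
      colB Z B *ᵥ rowC C *ᵥ v := by
    rw [Matrix.mulVec_mulVec, colB, rowC, Matrix.sum_mul]
    congr 1
    refine Finset.sum_congr rfl fun j _ => ?_
    rw [← Matrix.mul_kronecker_mul, mul_one]
    congr 1
    ext i k
    simp [Matrix.mul_apply, Matrix.vecMulVec_apply]
  have hA : ∑ j, Z j ⊗ₖ A j = 1 - pencilL Z A := (sub_sub_cancel _ _).symm
  simp only [Matrix.kronecker_add, Matrix.kronecker_smul, Finset.sum_add_distrib,
    ← Finset.smul_sum, hA, Matrix.add_mulVec, Matrix.sub_mulVec, Matrix.one_mulVec,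
    Matrix.smul_mulVec, hYX]

theorem fmEval_mulVec {d m n : ℕ} (Z : Fin d → Matrix (Fin m) (Fin m) ℂ)
    (A : Fin d → Matrix (Fin n) (Fin n) ℂ) (B : Fin d → Fin n → ℂ) (C : Fin n → ℂ) (D : ℂ)
    (w : Fin m × Unit → ℂ) :
    fmEval Z A B C D *ᵥ w = D • w + rowC C *ᵥ (pencilL Z A)⁻¹ *ᵥ colB Z B *ᵥ w := by
  rw [fmEval, Matrix.add_mulVec, Matrix.smul_mulVec, Matrix.one_mulVec, Matrix.mulVec_mulVec,
    Matrix.mulVec_mulVec]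
  -- `fmEval` was elaborated with the `CStarMatrix` product, defeq but not syntactically `Matrix`'s.
  rfl

/-- For `λ ≠ D = r(0)` and `Z ∈ Dom r`, `λ` is an eigenvalue of `r(Z)` iff `1` is an
eigenvalue of `∑ Z_j ⊗ A_j^{(λ)}` where `A_j^{(λ)} = A_j + (λ - D)⁻¹ B_j C*`; moreover if
`v` is an eigenvector of the latter for the eigenvalue `1`, then `(I ⊗ C*) v` is an
eigenvector of `r(Z)` for the eigenvalue `λ`. -/
theorem stmt_13 {d m n : ℕ}
    (A : Fin d → Matrix (Fin n) (Fin n) ℂ) (B : Fin d → Fin n → ℂ) (C : Fin n → ℂ)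
    (D : ℂ) (Z : Fin d → Matrix (Fin m) (Fin m) ℂ)
    (hZ : IsUnit (pencilL Z A)) (lam : ℂ) (hlam : lam ≠ D) :
    ((∃ w : Fin m × Unit → ℂ, w ≠ 0 ∧ (fmEval Z A B C D).mulVec w = lam • w) ↔
      (∃ v : Fin m × Fin n → ℂ, v ≠ 0 ∧
        (∑ j, Z j ⊗ₖ (A j + (lam - D)⁻¹ • Matrix.vecMulVec (B j)
          (fun i => star (C i)))).mulVec v = v)) ∧
    (∀ v : Fin m × Fin n → ℂ, v ≠ 0 →
      (∑ j, Z j ⊗ₖ (A j + (lam - D)⁻¹ • Matrix.vecMulVec (B j)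
          (fun i => star (C i)))).mulVec v = v →
      (rowC C).mulVec v ≠ 0 ∧
        (fmEval Z A B C D).mulVec ((rowC C).mulVec v) = lam • (rowC C).mulVec v) := by
  have hμ : lam - D ≠ 0 := sub_ne_zero.mpr hlam
  set M := ∑ j, Z j ⊗ₖ (A j + (lam - D)⁻¹ • Matrix.vecMulVec (B j) (fun i => star (C i)))
  have hfixed (v : Fin m × Fin n → ℂ) : M *ᵥ v = v ↔
      (lam - D) • pencilL Z A *ᵥ v = colB Z B *ᵥ rowC C *ᵥ v := by
    rw [sum_kronecker_add_smul_vecMulVec_mulVec, sub_add_eq_add_sub, add_sub_assoc, add_eq_left,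
      sub_eq_zero, eq_comm, eq_inv_smul_iff₀ hμ]
  have heigen (w : Fin m × Unit → ℂ) :
      fmEval Z A B C D *ᵥ w = lam • w ↔
        rowC C *ᵥ (pencilL Z A)⁻¹ *ᵥ colB Z B *ᵥ w = (lam - D) • w := by
    rw [fmEval_mulVec, sub_smul, eq_sub_iff_add_eq', eq_comm]
  have heigvec (v : Fin m × Fin n → ℂ) (hv0 : v ≠ 0) (hv : M *ᵥ v = v) :
      rowC C *ᵥ v ≠ 0 ∧ fmEval Z A B C D *ᵥ rowC C *ᵥ v = lam • rowC C *ᵥ v := by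
    rw [hfixed] at hv
    exact ⟨Matrix.mulVec_ne_zero_of_smul_mulVec_eq hZ hμ hv0 hv,
      (heigen _).mpr (Matrix.mulVec_inv_mulVec_mulVec_eq_smul hZ hv)⟩
  refine ⟨⟨fun ⟨w, hw0, hw⟩ => ?_, fun ⟨v, hv0, hv⟩ => ⟨_, heigvec v hv0 hv⟩⟩, heigvec⟩
  obtain ⟨v, rfl, hv⟩ :=
    Matrix.exists_smul_mulVec_eq_of_mulVec_inv_mulVec_eq_smul hZ hμ ((heigen w).mp hw)
  exact ⟨v, fun h => hw0 (by rw [h, Matrix.mulVec_zero]), (hfixed v).mpr hv⟩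
end
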